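/- Let D_q be the algebra generated by X^{±1}, P^{±1} with relation PX = qXP, where q ∈ C^* is not a root of unity. Then the zeroth Hochschild homology HH_0(D_q) = D_q/[D_q, D_q] is one-dimensional, spanned by the class of 1; equivalently, the commutator subspace [D_q, D_q] is spanned by the monomials X^i P^j with (i,j) ≠ (0,0). -/

import Mathlib

/-- Relations presenting the quantum torus `D_q = ℂ⟨X^{±1}, P^{±1}⟩ / (PX = qXP)`:
generators `0 ↦ X`, `1 ↦ X⁻¹`, `2 ↦ P`, `3 ↦ P⁻¹`. -/
inductive QTRel (q : ℂ) : FreeAlgebra ℂ (Fin 4) → FreeAlgebra ℂ (Fin 4) → Prop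
  | x_xinv : QTRel q (FreeAlgebra.ι ℂ 0 * FreeAlgebra.ι ℂ 1) 1
  | xinv_x : QTRel q (FreeAlgebra.ι ℂ 1 * FreeAlgebra.ι ℂ 0) 1
  | p_pinv : QTRel q (FreeAlgebra.ι ℂ 2 * FreeAlgebra.ι ℂ 3) 1
  | pinv_p : QTRel q (FreeAlgebra.ι ℂ 3 * FreeAlgebra.ι ℂ 2) 1
  | px_qxp : QTRel q (FreeAlgebra.ι ℂ 2 * FreeAlgebra.ι ℂ 0)
      (q • (FreeAlgebra.ι ℂ 0 * FreeAlgebra.ι ℂ 2))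

/-- The quantum torus algebra `D_q`. -/
abbrev QTorus (q : ℂ) := RingQuot (QTRel q)

noncomputable def Xgen (q : ℂ) : QTorus q := RingQuot.mkAlgHom ℂ (QTRel q) (FreeAlgebra.ι ℂ 0)
noncomputable def XgenInv (q : ℂ) : QTorus q := RingQuot.mkAlgHom ℂ (QTRel q) (FreeAlgebra.ι ℂ 1)
noncomputable def Pgen (q : ℂ) : QTorus q := RingQuot.mkAlgHom ℂ (QTRel q) (FreeAlgebra.ι ℂ 2)
noncomputable def PgenInv (q : ℂ) : QTorus q := RingQuot.mkAlgHom ℂ (QTRel q) (FreeAlgebra.ι ℂ 3)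

/-- The monomial `Xⁱ Pʲ ∈ D_q` for `i, j : ℤ`. -/
noncomputable def qmon (q : ℂ) (i j : ℤ) : QTorus q :=
  (if 0 ≤ i then Xgen q ^ i.toNat else XgenInv q ^ (-i).toNat) *
  (if 0 ≤ j then Pgen q ^ j.toNat else PgenInv q ^ (-j).toNat)

/-- The commutator subspace `[D_q, D_q]`. -/
noncomputable def commSpace (q : ℂ) : Submodule ℂ (QTorus q) :=
  Submodule.span ℂ {x | ∃ a b : QTorus q, x = a * b - b * a}

/-!
The monomials `Xⁱ Pʲ` span `D_q` and multiply by `Xⁱ Pʲ · X^{i'} P^{j'} = q^{i'j} X^{i+i'} P^{j+j'}`,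
so `[Xᵃ Pᵇ, Xᶜ Pᵈ] = (q^{cb} - q^{ad}) X^{a+c} P^{b+d}`. When `(a + c, b + d) = (0, 0)` the
coefficient vanishes, hence `[D_q, D_q]` lies in the span of the non-constant monomials. Any other
`Xⁱ Pʲ` is such a commutator up to a non-zero factor: pick `(a, b)` with `bi - aj ≠ 0`, so that
`q^{(i-a)b} - q^{a(j-b)} ≠ 0` as `q` is not a root of unity. Finally `1 ∉ [D_q, D_q]` because the
constant-term functional kills the non-constant monomials; it is realised through the action of
`D_q` on `ℂ[ℤ²]` given by `X e_{(i,j)} = e_{(i+1,j)}`, `P e_{(i,j)} = qⁱ e_{(i,j+1)}`, under which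
`Xⁱ Pʲ` sends `e_0` to `e_{(i,j)}`.
-/

section CentralCommutator

variable {G : Type*} [Group G] {x y z : G}

theorem zpow_mul_zpow_of_mul_eq (hzx : Commute z x) (hzy : Commute z y)
    (h : y * x = z * x * y) (a b : ℤ) : y ^ b * x ^ a = z ^ (a * b) * x ^ a * y ^ b := by
  have hconj : SemiconjBy (x ^ a) (z ^ a * y) y := by
    have := (show SemiconjBy y x (z * x) from h).zpow_right a
    rw [SemiconjBy, hzx.mul_zpow] at this
    rw [SemiconjBy, this, ← mul_assoc, ((hzx.zpow_zpow a a).eq)]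
  have := hconj.zpow_right b
  rw [SemiconjBy, (hzy.zpow_left a).mul_zpow, ← zpow_mul] at this
  rw [← this, ← mul_assoc, (hzx.zpow_zpow _ a).eq]

theorem zpow_mul_zpow_mul_zpow_mul_zpow_of_mul_eq (hzx : Commute z x) (hzy : Commute z y)
    (h : y * x = z * x * y) (i j i' j' : ℤ) :
    x ^ i * y ^ j * (x ^ i' * y ^ j') = z ^ (i' * j) * (x ^ (i + i') * y ^ (j + j')) := by
  rw [mul_assoc, ← mul_assoc (y ^ j), zpow_mul_zpow_of_mul_eq hzx hzy h, zpow_add, zpow_add]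
  simp only [mul_assoc]
  rw [← mul_assoc (x ^ i), ← (hzx.zpow_zpow _ i).eq]
  simp only [mul_assoc]

end CentralCommutator

theorem Units.val_zpow_eq_ite {M : Type*} [Monoid M] (u : Mˣ) (n : ℤ) :
    ((u ^ n : Mˣ) : M) = if 0 ≤ n then (u : M) ^ n.toNat else ((u⁻¹ : Mˣ) : M) ^ (-n).toNat := by
  obtain ⟨k, rfl | rfl⟩ := Int.eq_nat_or_neg n
  · simp
  · rcases k with _ | k
    · simp
    · rw [if_neg (by omega), zpow_neg, ← inv_zpow, neg_neg, zpow_natCast, Int.toNat_natCast,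
        Units.val_pow_eq_pow_val]

theorem zpow_ne_one_of_pow_ne_one {G₀ : Type*} [GroupWithZero G₀] {x : G₀}
    (hx : ∀ n : ℕ, 0 < n → x ^ n ≠ 1) {i : ℤ} (hi : i ≠ 0) : x ^ i ≠ 1 := by
  obtain ⟨n, rfl | rfl⟩ := Int.eq_nat_or_neg i
  · rw [zpow_natCast]
    exact hx n (by omega)
  · rw [zpow_neg, inv_ne_one, zpow_natCast]
    exact hx n (by omega)

section WeightedShift

variable {ι R : Type*} [CommSemiring R]

noncomputable def weightedShift (s : ι → ι) (w : ι → R) : Module.End R (ι →₀ R) :=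
  Finsupp.lsum R fun v => w v • Finsupp.lsingle (s v)

theorem weightedShift_single (s : ι → ι) (w : ι → R) (v : ι) (a : R) :
    weightedShift s w (Finsupp.single v a) = Finsupp.single (s v) (w v * a) := by
  simp [weightedShift, Finsupp.smul_single]

theorem weightedShift_mul_weightedShift (s s' : ι → ι) (w w' : ι → R) :
    weightedShift s w * weightedShift s' w' = weightedShift (s ∘ s') (fun v => w (s' v) * w' v) :=
  Finsupp.lhom_ext fun v a => by
    rw [Module.End.mul_apply, weightedShift_single, weightedShift_single, weightedShift_single,
      Function.comp_apply, mul_assoc]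

theorem weightedShift_id_one : weightedShift (id : ι → ι) (fun _ => (1 : R)) = 1 :=
  Finsupp.lhom_ext fun v a => by
    rw [weightedShift_single, id, one_mul, Module.End.one_apply]

theorem smul_weightedShift (c : R) (s : ι → ι) (w : ι → R) :
    c • weightedShift s w = weightedShift s (fun v => c * w v) :=
  Finsupp.lhom_ext fun v a => by
    rw [LinearMap.smul_apply, weightedShift_single, weightedShift_single, Finsupp.smul_single,
      smul_eq_mul, mul_assoc]

end WeightedShift

namespace QTorus

variable {q : ℂ}

theorem Xgen_mul_XgenInv : Xgen q * XgenInv q = 1 := by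
  rw [Xgen, XgenInv, ← map_mul, RingQuot.mkAlgHom_rel ℂ QTRel.x_xinv, map_one]

theorem XgenInv_mul_Xgen : XgenInv q * Xgen q = 1 := by
  rw [Xgen, XgenInv, ← map_mul, RingQuot.mkAlgHom_rel ℂ QTRel.xinv_x, map_one]

theorem Pgen_mul_PgenInv : Pgen q * PgenInv q = 1 := by
  rw [Pgen, PgenInv, ← map_mul, RingQuot.mkAlgHom_rel ℂ QTRel.p_pinv, map_one]

theorem PgenInv_mul_Pgen : PgenInv q * Pgen q = 1 := by
  rw [Pgen, PgenInv, ← map_mul, RingQuot.mkAlgHom_rel ℂ QTRel.pinv_p, map_one]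

theorem Pgen_mul_Xgen : Pgen q * Xgen q = q • (Xgen q * Pgen q) := by
  rw [Pgen, Xgen, ← map_mul, RingQuot.mkAlgHom_rel ℂ QTRel.px_qxp, map_smul, map_mul]

noncomputable def unitX (q : ℂ) : (QTorus q)ˣ :=
  ⟨Xgen q, XgenInv q, Xgen_mul_XgenInv, XgenInv_mul_Xgen⟩

noncomputable def unitP (q : ℂ) : (QTorus q)ˣ :=
  ⟨Pgen q, PgenInv q, Pgen_mul_PgenInv, PgenInv_mul_Pgen⟩

noncomputable def unitQ (hq : q ≠ 0) : (QTorus q)ˣ :=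
  Units.map (algebraMap ℂ (QTorus q)) (Units.mk0 q hq)

theorem val_unitQ_zpow (hq : q ≠ 0) (n : ℤ) :
    ((unitQ hq ^ n : (QTorus q)ˣ) : QTorus q) = algebraMap ℂ (QTorus q) (q ^ n) := by
  rw [unitQ, ← map_zpow, Units.coe_map, MonoidHom.coe_coe, Units.val_zpow_eq_zpow_val,
    Units.val_mk0]

theorem commute_unitQ (hq : q ≠ 0) (u : (QTorus q)ˣ) : Commute (unitQ hq) u :=
  Units.ext (Algebra.commutes q (u : QTorus q))

theorem unitP_mul_unitX (hq : q ≠ 0) : unitP q * unitX q = unitQ hq * unitX q * unitP q :=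
  Units.ext <| by
    simp only [Units.val_mul, mul_assoc]
    exact Pgen_mul_Xgen.trans (Algebra.smul_def q _)

theorem qmon_eq_val (i j : ℤ) :
    qmon q i j = ((unitX q ^ i * unitP q ^ j : (QTorus q)ˣ) : QTorus q) := by
  rw [qmon, Units.val_mul, Units.val_zpow_eq_ite, Units.val_zpow_eq_ite]
  rfl

theorem qmon_mul (hq : q ≠ 0) (i j i' j' : ℤ) :
    qmon q i j * qmon q i' j' = q ^ (i' * j) • qmon q (i + i') (j + j') := by
  rw [qmon_eq_val, qmon_eq_val, qmon_eq_val, ← Units.val_mul,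
    zpow_mul_zpow_mul_zpow_mul_zpow_of_mul_eq (commute_unitQ hq _) (commute_unitQ hq _)
      (unitP_mul_unitX hq),
    Units.val_mul, val_unitQ_zpow, Algebra.smul_def]

theorem qmon_zero_zero : qmon q 0 0 = 1 := by
  simp [qmon]

theorem qmon_one_zero : qmon q 1 0 = Xgen q := by
  norm_num [qmon]

theorem qmon_neg_one_zero : qmon q (-1) 0 = XgenInv q := by
  norm_num [qmon]

theorem qmon_zero_one : qmon q 0 1 = Pgen q := by
  norm_num [qmon]

theorem qmon_zero_neg_one : qmon q 0 (-1) = PgenInv q := by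
  norm_num [qmon]

theorem qmon_mul_sub_mul_qmon (hq : q ≠ 0) (a b c d : ℤ) :
    qmon q a b * qmon q c d - qmon q c d * qmon q a b
      = (q ^ (c * b) - q ^ (a * d)) • qmon q (a + c) (b + d) := by
  rw [qmon_mul hq, qmon_mul hq, add_comm c, add_comm d]
  exact (sub_smul (q ^ (c * b)) (q ^ (a * d)) (qmon q (a + c) (b + d))).symm

theorem Xgen_mul_qmon (hq : q ≠ 0) (i j : ℤ) : Xgen q * qmon q i j = qmon q (i + 1) j := by
  rw [← qmon_one_zero, qmon_mul hq, mul_zero, zpow_zero, one_smul, add_comm 1, zero_add]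

theorem XgenInv_mul_qmon (hq : q ≠ 0) (i j : ℤ) : XgenInv q * qmon q i j = qmon q (i - 1) j := by
  rw [← qmon_neg_one_zero, qmon_mul hq, mul_zero, zpow_zero, one_smul, neg_add_eq_sub, zero_add]

theorem Pgen_mul_qmon (hq : q ≠ 0) (i j : ℤ) : Pgen q * qmon q i j = q ^ i • qmon q i (j + 1) := by
  rw [← qmon_zero_one, qmon_mul hq, mul_one, zero_add, add_comm 1]

theorem PgenInv_mul_qmon (hq : q ≠ 0) (i j : ℤ) :
    PgenInv q * qmon q i j = q ^ (-i) • qmon q i (j - 1) := by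
  rw [← qmon_zero_neg_one, qmon_mul hq, mul_neg_one, zero_add, neg_add_eq_sub]

def monomials (q : ℂ) : Set (QTorus q) :=
  {m | ∃ i j : ℤ, m = qmon q i j}

def nonconstMonomials (q : ℂ) : Set (QTorus q) :=
  {m | ∃ i j : ℤ, (i, j) ≠ (0, 0) ∧ m = qmon q i j}

theorem mul_mem_span_monomials (hq : q ≠ 0) {a b : QTorus q}
    (ha : a ∈ Submodule.span ℂ (monomials q))
    (hb : b ∈ Submodule.span ℂ (monomials q)) :
    a * b ∈ Submodule.span ℂ (monomials q) := by
  have := Submodule.mul_mem_mul ha hb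
  rw [Submodule.span_mul_span] at this
  refine Submodule.span_le.2 ?_ this
  rintro _ ⟨_, ⟨i, j, rfl⟩, _, ⟨i', j', rfl⟩, rfl⟩
  dsimp only
  rw [SetLike.mem_coe, qmon_mul hq]
  exact Submodule.smul_mem _ _ (Submodule.subset_span ⟨i + i', j + j', rfl⟩)

theorem span_monomials_eq_top (hq : q ≠ 0) :
    Submodule.span ℂ (monomials q) = ⊤ := by
  let S := (Submodule.span ℂ (monomials q)).toSubalgebra
    (qmon_zero_zero ▸ Submodule.subset_span ⟨0, 0, rfl⟩) fun _ _ => mul_mem_span_monomials hq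
  have hgen : ∀ i j : ℤ, qmon q i j ∈ S := fun i j => Submodule.subset_span ⟨i, j, rfl⟩
  refine Submodule.eq_top_iff'.2 fun z => ?_
  obtain ⟨w, rfl⟩ := RingQuot.mkAlgHom_surjective ℂ (QTRel q) z
  show _ ∈ S
  induction w using FreeAlgebra.induction with
  | grade0 c => exact (RingQuot.mkAlgHom ℂ (QTRel q)).commutes c ▸ S.algebraMap_mem c
  | grade1 g =>
    fin_cases g
    · show Xgen q ∈ S
      exact qmon_one_zero ▸ hgen 1 0
    · show XgenInv q ∈ S
      exact qmon_neg_one_zero ▸ hgen (-1) 0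
    · show Pgen q ∈ S
      exact qmon_zero_one ▸ hgen 0 1
    · show PgenInv q ∈ S
      exact qmon_zero_neg_one ▸ hgen 0 (-1)
  | mul a b ha hb => exact (map_mul (RingQuot.mkAlgHom ℂ (QTRel q)) a b) ▸ S.mul_mem ha hb
  | add a b ha hb => exact (map_add (RingQuot.mkAlgHom ℂ (QTRel q)) a b) ▸ S.add_mem ha hb

theorem commutator_mem_commSpace (a b : QTorus q) : a * b - b * a ∈ commSpace q :=
  Submodule.subset_span ⟨a, b, rfl⟩

theorem qmon_mem_commSpace (hq : q ≠ 0) (hroot : ∀ n : ℕ, 0 < n → q ^ n ≠ 1) {i j : ℤ}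
    (hij : (i, j) ≠ (0, 0)) : qmon q i j ∈ commSpace q := by
  obtain ⟨a, b, hab⟩ : ∃ a b : ℤ, b * i - a * j ≠ 0 := by
    by_cases hi : i = 0
    · exact ⟨1, 0, by simp_all⟩
    · exact ⟨0, 1, by simpa using hi⟩
  have hcoef : q ^ ((i - a) * b) - q ^ (a * (j - b)) ≠ 0 := by
    rw [sub_ne_zero, Ne, ← div_eq_one_iff_eq (zpow_ne_zero _ hq), ← zpow_sub₀ hq]
    refine zpow_ne_one_of_pow_ne_one hroot ?_
    rwa [show (i - a) * b - a * (j - b) = b * i - a * j by ring]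
  have h := qmon_mul_sub_mul_qmon hq a b (i - a) (j - b)
  rw [add_sub_cancel, add_sub_cancel] at h
  rw [← inv_smul_smul₀ hcoef (qmon q i j), ← h]
  exact Submodule.smul_mem _ _ (commutator_mem_commSpace _ _)

theorem commSpace_le_span_nonconstMonomials (hq : q ≠ 0) :
    commSpace q ≤ Submodule.span ℂ (nonconstMonomials q) := by
  let bracket : QTorus q →ₗ[ℂ] QTorus q →ₗ[ℂ] QTorus q :=
    LinearMap.mk₂ ℂ (fun a b => a * b - b * a)
      (fun _ _ _ => by noncomm_ring) (fun _ _ _ => by rw [smul_mul_assoc, mul_smul_comm, smul_sub])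
      (fun _ _ _ => by noncomm_ring) (fun _ _ _ => by rw [smul_mul_assoc, mul_smul_comm, smul_sub])
  refine Submodule.span_le.2 ?_
  rintro _ ⟨a, b, rfl⟩
  have hab : bracket a b ∈ Submodule.map₂ bracket ⊤ ⊤ := Submodule.apply_mem_map₂ _ trivial trivial
  rw [← span_monomials_eq_top hq, Submodule.map₂_span_span] at hab
  refine Submodule.span_le.2 ?_ hab
  rintro _ ⟨_, ⟨i, j, rfl⟩, _, ⟨i', j', rfl⟩, rfl⟩
  simp only [bracket, LinearMap.mk₂_apply, SetLike.mem_coe, qmon_mul_sub_mul_qmon hq]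
  by_cases h : (i + i', j + j') = (0, 0)
  · obtain ⟨hi, hj⟩ := Prod.mk.inj h
    rw [show i' = -i by omega, show j' = -j by omega, mul_neg, neg_mul, sub_self, zero_smul]
    exact zero_mem _
  · exact Submodule.smul_mem _ _ (Submodule.subset_span ⟨_, _, h, rfl⟩)

noncomputable def latticeRepGen (q : ℂ) : Fin 4 → Module.End ℂ ((ℤ × ℤ) →₀ ℂ) :=
  ![weightedShift (fun v => (v.1 + 1, v.2)) (fun _ => 1),
    weightedShift (fun v => (v.1 - 1, v.2)) (fun _ => 1),
    weightedShift (fun v => (v.1, v.2 + 1)) (fun v => q ^ v.1),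
    weightedShift (fun v => (v.1, v.2 - 1)) (fun v => q ^ (-v.1))]

theorem latticeRepGen_rel (hq : q ≠ 0) ⦃x y : FreeAlgebra ℂ (Fin 4)⦄ (h : QTRel q x y) :
    FreeAlgebra.lift ℂ (latticeRepGen q) x = FreeAlgebra.lift ℂ (latticeRepGen q) y := by
  induction h <;>
    simp only [map_mul, map_one, map_smul, FreeAlgebra.lift_ι_apply, latticeRepGen,
      Matrix.cons_val, weightedShift_mul_weightedShift, smul_weightedShift, ← weightedShift_id_one]
  all_goals
    congr 1 <;> funext v <;>
      simp [Function.comp, zpow_add_one₀ hq, mul_comm q, zpow_ne_zero _ hq]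

noncomputable def latticeRep (hq : q ≠ 0) : QTorus q →ₐ[ℂ] Module.End ℂ ((ℤ × ℤ) →₀ ℂ) :=
  RingQuot.liftAlgHom ℂ ⟨FreeAlgebra.lift ℂ (latticeRepGen q), latticeRepGen_rel hq⟩

theorem latticeRep_mkAlgHom_ι (hq : q ≠ 0) (g : Fin 4) :
    latticeRep hq (RingQuot.mkAlgHom ℂ (QTRel q) (FreeAlgebra.ι ℂ g)) = latticeRepGen q g := by
  rw [latticeRep, RingQuot.liftAlgHom_mkAlgHom_apply, FreeAlgebra.lift_ι_apply]

theorem latticeRep_qmon_single_zero (hq : q ≠ 0) (i j : ℤ) :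
    latticeRep hq (qmon q i j) (Finsupp.single (0, 0) 1) = Finsupp.single (i, j) 1 := by
  induction i using Int.induction_on with
  | zero =>
    induction j using Int.induction_on with
    | zero => rw [qmon_zero_zero, map_one, Module.End.one_apply]
    | succ n ih =>
      have h : qmon q 0 (n + 1) = Pgen q * qmon q 0 n := by
        rw [Pgen_mul_qmon hq, zpow_zero, one_smul]
      rw [h, map_mul, Module.End.mul_apply, ih]
      simp [Pgen, latticeRep_mkAlgHom_ι, latticeRepGen, weightedShift_single]
    | pred n ih =>
      have h : qmon q 0 (-n - 1) = PgenInv q * qmon q 0 (-n) := by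
        rw [PgenInv_mul_qmon hq, neg_zero, zpow_zero, one_smul]
      rw [h, map_mul, Module.End.mul_apply, ih]
      simp [PgenInv, latticeRep_mkAlgHom_ι, latticeRepGen, weightedShift_single]
  | succ n ih =>
    rw [← Xgen_mul_qmon hq, map_mul, Module.End.mul_apply, ih]
    simp [Xgen, latticeRep_mkAlgHom_ι, latticeRepGen, weightedShift_single]
  | pred n ih =>
    rw [← XgenInv_mul_qmon hq, map_mul, Module.End.mul_apply, ih]
    simp [XgenInv, latticeRep_mkAlgHom_ι, latticeRepGen, weightedShift_single]

noncomputable def constCoeff (hq : q ≠ 0) : QTorus q →ₗ[ℂ] ℂ :=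
  Finsupp.lapply (0, 0) ∘ₗ LinearMap.applyₗ (Finsupp.single (0, 0) 1) ∘ₗ (latticeRep hq).toLinearMap

theorem constCoeff_qmon (hq : q ≠ 0) (i j : ℤ) :
    constCoeff hq (qmon q i j) = if (i, j) = (0, 0) then 1 else 0 := by
  rw [constCoeff, LinearMap.comp_apply, LinearMap.comp_apply, AlgHom.toLinearMap_apply,
    LinearMap.applyₗ_apply_apply, latticeRep_qmon_single_zero, Finsupp.lapply_apply,
    Finsupp.single_apply]

theorem span_nonconstMonomials_le_ker_constCoeff (hq : q ≠ 0) :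
    Submodule.span ℂ (nonconstMonomials q) ≤ LinearMap.ker (constCoeff hq) :=
  Submodule.span_le.2 fun _ ⟨i, j, hij, hm⟩ => by
    rw [SetLike.mem_coe, LinearMap.mem_ker, hm, constCoeff_qmon, if_neg hij]

theorem span_one_sup_span_nonconstMonomials_eq_top (hq : q ≠ 0) :
    Submodule.span ℂ {1} ⊔ Submodule.span ℂ (nonconstMonomials q) = ⊤ := by
  rw [eq_top_iff, ← span_monomials_eq_top hq, Submodule.span_le]
  rintro _ ⟨i, j, rfl⟩
  by_cases hij : (i, j) = (0, 0)
  · obtain ⟨rfl, rfl⟩ := Prod.mk.inj hij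
    rw [qmon_zero_zero]
    exact Submodule.mem_sup_left (Submodule.mem_span_singleton_self 1)
  · exact Submodule.mem_sup_right (Submodule.subset_span ⟨i, j, hij, rfl⟩)

theorem one_notMem_commSpace (hq : q ≠ 0) : (1 : QTorus q) ∉ commSpace q := fun h => by
  have := span_nonconstMonomials_le_ker_constCoeff hq (commSpace_le_span_nonconstMonomials hq h)
  rw [LinearMap.mem_ker, ← qmon_zero_zero, constCoeff_qmon, if_pos rfl] at this
  exact one_ne_zero this

theorem commSpace_eq_span_nonconstMonomials (hq : q ≠ 0) (hroot : ∀ n : ℕ, 0 < n → q ^ n ≠ 1) :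
    commSpace q = Submodule.span ℂ (nonconstMonomials q) :=
  le_antisymm (commSpace_le_span_nonconstMonomials hq)
    (Submodule.span_le.2 fun _ ⟨_, _, hij, hm⟩ => hm ▸ qmon_mem_commSpace hq hroot hij)

end QTorus

/-- For `q ∈ ℂ*` not a root of unity, `HH₀(D_q) = D_q/[D_q, D_q]` is
one-dimensional, spanned by the class of `1`: every element is congruent to a scalar
modulo `[D_q, D_q]`, and `1 ∉ [D_q, D_q]`.  Equivalently, the commutator subspace
`[D_q, D_q]` is the span of the monomials `Xⁱ Pʲ` with `(i, j) ≠ (0, 0)`. -/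
theorem quantum_torus_HH0 (q : ℂ) (hq : q ≠ 0) (hroot : ∀ n : ℕ, 0 < n → q ^ n ≠ 1) :
    (∀ z : QTorus q, ∃ c : ℂ, z - algebraMap ℂ (QTorus q) c ∈ commSpace q) ∧
    (1 : QTorus q) ∉ commSpace q ∧
    commSpace q = Submodule.span ℂ
      {m | ∃ i j : ℤ, (i, j) ≠ (0, 0) ∧ m = qmon q i j} := by
  have hT := QTorus.commSpace_eq_span_nonconstMonomials hq hroot
  refine ⟨fun z => ?_, QTorus.one_notMem_commSpace hq, hT⟩
  have hz : z ∈ Submodule.span ℂ {1} ⊔ Submodule.span ℂ (QTorus.nonconstMonomials q) :=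
    QTorus.span_one_sup_span_nonconstMonomials_eq_top hq ▸ Submodule.mem_top
  obtain ⟨_, hc, t, ht, rfl⟩ := Submodule.mem_sup.1 hz
  obtain ⟨c, rfl⟩ := Submodule.mem_span_singleton.1 hc
  exact ⟨c, by rwa [Algebra.algebraMap_eq_smul_one, add_sub_cancel_left, hT]⟩
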